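/- For integers 0 ≤ k ≤ n, let T(n,k) = 2·C(n,k)²·C(2n+2,n)/C(2n+2,2k+1) ∈ ℚ. Work in R = ℚ[x,y][[t]], let S₁, S₂ ∈ R have constant term 1 and satisfy S₁² = 1 + 4t·x², S₂² = 1 + 4t·y², and set Φ = ∑_{n≥0} (n+2)·(-t)^{n+1} · ∑_{k=0}^{n} T(n,k)·x^{2k}·y^{2n-2k}. Then S₁·S₂·(x·S₂ - y·S₁)²·(1 + (x-y)²·Φ) = (x-y)². -/

import Mathlib

noncomputable section

open MvPolynomial

/-- The triangle A120406: `T(n,k) = 2·C(n,k)²·C(2n+2,n)/C(2n+2,2k+1)`. -/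
def Tnk (n k : ℕ) : ℚ :=
  2 * (n.choose k : ℚ) ^ 2 * ((2 * n + 2).choose n : ℚ) / ((2 * n + 2).choose (2 * k + 1) : ℚ)

/-- `ℚ[x,y]`, polynomials in two variables over `ℚ`. -/
abbrev Rxy : Type := MvPolynomial (Fin 2) ℚ

def px : Rxy := X 0
def py : Rxy := X 1

/-- `Φ = ∑_{n≥0} (n+2)(-t)^{n+1} ∑_{k=0}^n T(n,k) x^{2k} y^{2n-2k}` in `ℚ[x,y][[t]]`. -/
def Phi : PowerSeries Rxy :=
  PowerSeries.mk fun m => if 1 ≤ m then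
    MvPolynomial.C (((m + 1 : ℕ) : ℚ) * (-1 : ℚ) ^ m) *
      ∑ k ∈ Finset.range m,
        MvPolynomial.C (Tnk (m - 1) k) * px ^ (2 * k) * py ^ (2 * (m - 1) - 2 * k)
  else 0

open Finset Nat

def E (n : ℕ) : ℚ := (Nat.centralBinom n : ℚ)

lemma E_succ (n : ℕ) : ((n:ℚ)+1) * E (n+1) = 2*(2*(n:ℚ)+1) * E n := by
  have := Nat.succ_mul_centralBinom_succ n
  have h := congrArg (Nat.cast : ℕ → ℚ) this
  push_cast at h
  unfold E; linarith

lemma E_pos (n : ℕ) : 0 < E n := by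
  unfold E; exact_mod_cast Nat.centralBinom_pos n

lemma E_zero : E 0 = 1 := by unfold E; norm_num [Nat.centralBinom]
lemma E_one : E 1 = 2 := by unfold E; norm_num [Nat.centralBinom]

/-- step lemma -/
lemma Esum_step (n : ℕ) :
    ∑ i ∈ range (n+2), E i * E (n+1-i) = 4 * ∑ i ∈ range (n+1), E i * E (n-i) := by
  have per : ∀ i ∈ range (n+1),
      E i * E (n+1-i) - 4 * (E i * E (n-i))
      = -((i:ℚ)+1) * E (i+1) * E (n+1-(i+1)) / ((n:ℚ)+1)
        - (-(i:ℚ) * E i * E (n+1-i) / ((n:ℚ)+1)) := by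
    intro i hi
    have hin : i ≤ n := by simpa using Nat.lt_succ_iff.mp (mem_range.mp hi)
    obtain ⟨j, hj⟩ : ∃ j, n = i + j := ⟨n - i, by omega⟩
    subst hj
    have h1 : i + j + 1 - i = j + 1 := by omega
    have h2 : i + j - i = j := by omega
    have h3 : i + j + 1 - (i+1) = j := by omega
    rw [h1, h2, h3]
    have hi1 := E_succ i
    have hj1 := E_succ j
    have hne : ((i:ℚ)+(j:ℚ)+1) ≠ 0 := by positivity
    push_cast
    field_simp
    nlinarith [hi1, hj1, E_pos i, E_pos j]
  have tele := Finset.sum_range_sub (fun i => -(i:ℚ) * E i * E (n+1-i) / ((n:ℚ)+1)) (n+1)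
  beta_reduce at tele
  have key : ∑ i ∈ range (n+1), (E i * E (n+1-i) - 4 * (E i * E (n-i))) = - E (n+1) := by
    rw [Finset.sum_congr rfl per]
    push_cast at tele ⊢
    rw [tele, Nat.sub_self, E_zero]
    have : ((n:ℚ)+1) ≠ 0 := by positivity
    field_simp
    ring
  rw [Finset.sum_range_succ]
  rw [Finset.sum_sub_distrib, ← Finset.mul_sum] at key
  have : n + 1 - (n+1) = 0 := by omega
  rw [this, E_zero]
  linarith

lemma Tclosed (k j : ℕ) : Tnk (k+j) k
    = 2 * E k * E j * (2*(k:ℚ)+1) * (2*(j:ℚ)+1) / (((k:ℚ)+(j:ℚ)+1) * ((k:ℚ)+(j:ℚ)+2)) := by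
  unfold Tnk E
  rw [Nat.centralBinom, Nat.centralBinom]
  have h1 : ((k+j).choose k : ℚ) = (k+j)! / (k ! * j !) := by
    rw [Nat.cast_choose ℚ (Nat.le_add_right k j), Nat.add_sub_cancel_left]
  have h2 : ((2*(k+j)+2).choose (k+j) : ℚ) = (2*(k+j)+2)! / ((k+j)! * ((k+j)+2)!) := by
    rw [Nat.cast_choose ℚ (by omega : k+j ≤ 2*(k+j)+2), show 2*(k+j)+2 - (k+j) = (k+j)+2 by omega]
  have h3 : ((2*(k+j)+2).choose (2*k+1) : ℚ) = (2*(k+j)+2)! / ((2*k+1)! * (2*j+1)!) := by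
    rw [Nat.cast_choose ℚ (by omega : 2*k+1 ≤ 2*(k+j)+2), show 2*(k+j)+2 - (2*k+1) = 2*j+1 by omega]
  have h4 : ((2*k).choose k : ℚ) = (2*k)! / (k ! * k !) := by
    rw [Nat.cast_choose ℚ (by omega : k ≤ 2*k), show 2*k - k = k by omega]
  have h5 : ((2*j).choose j : ℚ) = (2*j)! / (j ! * j !) := by
    rw [Nat.cast_choose ℚ (by omega : j ≤ 2*j), show 2*j - j = j by omega]
  rw [h1, h2, h3, h4, h5]
  have e1 : ((2*k+1)! : ℚ) = (2*(k:ℚ)+1) * ((2*k)! : ℚ) := by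
    rw [Nat.factorial_succ]; push_cast; ring
  have e2 : ((2*j+1)! : ℚ) = (2*(j:ℚ)+1) * ((2*j)! : ℚ) := by
    rw [Nat.factorial_succ]; push_cast; ring
  have e3 : (((k+j)+2)! : ℚ) = ((k:ℚ)+(j:ℚ)+2) * (((k:ℚ)+(j:ℚ)+1)) * ((k+j)! : ℚ) := by
    rw [show (k+j)+2 = ((k+j)+1)+1 by omega, Nat.factorial_succ, Nat.factorial_succ]
    push_cast; ring
  rw [e1, e2, e3]
  have f0 : ∀ m : ℕ, ((m ! : ℚ)) ≠ 0 := fun m => by exact_mod_cast (Nat.factorial_pos m).ne'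
  have g1 : (2*(k:ℚ)+1) ≠ 0 := by positivity
  have g2 : (2*(j:ℚ)+1) ≠ 0 := by positivity
  have g3 : ((k:ℚ)+(j:ℚ)+1) ≠ 0 := by positivity
  have g4 : ((k:ℚ)+(j:ℚ)+2) ≠ 0 := by positivity
  field_simp

lemma E_succ_div (n : ℕ) : E (n+1) = 2*(2*(n:ℚ)+1) * E n / ((n:ℚ)+1) := by
  have h := E_succ n
  have : ((n:ℚ)+1) ≠ 0 := by positivity
  field_simp
  linarith

lemma case_a0 (n : ℕ) : ((n:ℚ)+2) * Tnk n 0 = E 0 * E (n+1) := by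
  have h := Tclosed 0 n
  rw [Nat.zero_add] at h
  rw [h, E_succ_div n, E_zero]
  have h1 : ((n:ℚ)+1) ≠ 0 := by positivity
  have h2 : ((n:ℚ)+2) ≠ 0 := by positivity
  push_cast
  field_simp
  ring

lemma case_top (n : ℕ) : ((n:ℚ)+2) * Tnk n n = E (n+1) * E 0 := by
  have h := Tclosed n 0
  rw [Nat.add_zero] at h
  rw [h, E_succ_div n, E_zero]
  have h1 : ((n:ℚ)+1) ≠ 0 := by positivity
  have h2 : ((n:ℚ)+2) ≠ 0 := by positivity
  push_cast
  field_simp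
  ring

lemma case_a1 (c : ℕ) :
    ((c:ℚ)+3) * (Tnk (c+1) 1 - 2 * Tnk (c+1) 0)
      = E 0 * E (c+2) + E 1 * E (c+1) - 8 * (E 0 * E (c+1)) := by
  have h1 := Tclosed 1 c
  rw [show 1+c = c+1 by omega] at h1
  have h2 := Tclosed 0 (c+1)
  rw [show 0+(c+1) = c+1 by omega] at h2
  rw [h1, h2, E_zero, E_one, show c+2 = (c+1)+1 from rfl, E_succ_div (c+1), E_succ_div c]
  have g1 : ((c:ℚ)+1) ≠ 0 := by positivity
  have g2 : ((c:ℚ)+2) ≠ 0 := by positivity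
  have g3 : ((c:ℚ)+3) ≠ 0 := by positivity
  push_cast
  field_simp
  ring

lemma case_topm1 (b : ℕ) :
    ((b:ℚ)+3) * (Tnk (b+1) b - 2 * Tnk (b+1) (b+1))
      = E (b+1) * E 1 + E (b+2) * E 0 - 8 * (E (b+1) * E 0) := by
  have h1 := Tclosed b 1
  have h2 := Tclosed (b+1) 0
  rw [show (b+1)+0 = b+1 by omega] at h2
  rw [h1, h2, E_zero, E_one, show b+2 = (b+1)+1 from rfl, E_succ_div (b+1), E_succ_div b]
  have g1 : ((b:ℚ)+1) ≠ 0 := by positivity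
  have g2 : ((b:ℚ)+2) ≠ 0 := by positivity
  have g3 : ((b:ℚ)+3) ≠ 0 := by positivity
  push_cast
  field_simp
  ring

lemma case_main (b c : ℕ) :
    ((b:ℚ)+(c:ℚ)+4) * (Tnk (b+c+2) (b+2) - 2*Tnk (b+c+2) (b+1) + Tnk (b+c+2) b)
      = E (b+1) * E (c+2) + E (b+2) * E (c+1) - 8 * (E (b+1) * E (c+1)) := by
  have h1 := Tclosed (b+2) c
  rw [show (b+2)+c = b+c+2 by omega] at h1
  have h2 := Tclosed (b+1) (c+1)
  rw [show (b+1)+(c+1) = b+c+2 by omega] at h2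
  have h3 := Tclosed b (c+2)
  rw [show b+(c+2) = b+c+2 by omega] at h3
  rw [h1, h2, h3, show b+2 = (b+1)+1 from rfl, show c+2 = (c+1)+1 from rfl,
    E_succ_div (b+1), E_succ_div (c+1), E_succ_div b, E_succ_div c]
  have g1 : ((b:ℚ)+1) ≠ 0 := by positivity
  have g2 : ((b:ℚ)+2) ≠ 0 := by positivity
  have g3 : ((c:ℚ)+1) ≠ 0 := by positivity
  have g4 : ((c:ℚ)+2) ≠ 0 := by positivity
  have g5 : ((b:ℚ)+(c:ℚ)+3) ≠ 0 := by positivity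
  have g6 : ((b:ℚ)+(c:ℚ)+4) ≠ 0 := by positivity
  push_cast
  field_simp
  ring

lemma Tnk00 : Tnk 0 0 = 1 := by norm_num [Tnk]

lemma keyQ (n a : ℕ) (ha : a < n+3) :
    (if 2 ≤ a ∧ a < n+1+2 then ((n:ℚ)+2) * Tnk n (a-2) else 0)
    - (if 1 ≤ a ∧ a < n+1+1 then 2*(((n:ℚ)+2) * Tnk n (a-1)) else 0)
    + (if 0 ≤ a ∧ a < n+1+0 then ((n:ℚ)+2) * Tnk n (a-0) else 0)
    = (if 1 ≤ a ∧ a < n+2+1 then E (a-1) * E (n+1-(a-1)) else 0)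
    + (if 0 ≤ a ∧ a < n+2+0 then E (a-0) * E (n+1-(a-0)) else 0)
    - (if 1 ≤ a ∧ a < n+1+1 then 8 * (E (a-1) * E (n-(a-1))) else 0) := by
  rcases Nat.eq_zero_or_pos a with rfl | ha1
  · rw [if_neg (by omega), if_neg (by omega), if_pos (by omega),
      if_neg (by omega), if_pos (by omega), if_neg (by omega)]
    simpa using case_a0 n
  rcases Nat.eq_or_lt_of_le ha1 with haa | ha2
  · -- a = 1
    obtain rfl : a = 1 := haa.symm
    rcases Nat.eq_zero_or_pos n with rfl | hn
    · norm_num [Tnk00, E_zero, E_one]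
    obtain ⟨c, rfl⟩ : ∃ c, n = c+1 := ⟨n-1, by omega⟩
    rw [if_neg (by omega), if_pos (by omega), if_pos (by omega),
      if_pos (by omega), if_pos (by omega), if_pos (by omega)]
    simp only [Nat.sub_zero, Nat.sub_self]
    rw [show c+1+1-1 = c+1 by omega, show c+1+1 = c+2 by omega]
    have h := case_a1 c
    push_cast
    linarith [h]
  -- now 2 ≤ a
  rcases Nat.eq_or_lt_of_le (by omega : a ≤ n+2) with htop | hlt
  · -- a = n+2
    subst htop
    rw [if_pos (by omega), if_neg (by omega), if_neg (by omega),
      if_pos (by omega), if_neg (by omega), if_neg (by omega)]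
    have e1 : n+2-2 = n := by omega
    have e2 : n+2-1 = n+1 := by omega
    have e3 : n+1-(n+1) = 0 := by omega
    rw [e1, e2, e3]
    simpa using case_top n
  rcases Nat.eq_or_lt_of_le (by omega : a ≤ n+1) with htop1 | hint
  · -- a = n+1, n ≥ 1
    subst htop1
    obtain ⟨b, rfl⟩ : ∃ b, n = b+1 := ⟨n-1, by omega⟩
    rw [if_pos (by omega), if_pos (by omega), if_neg (by omega),
      if_pos (by omega), if_pos (by omega), if_pos (by omega)]
    have e1 : b+1+1-2 = b := by omega
    have e2 : b+1+1-1 = b+1 := by omega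
    have e3 : b+1+1-(b+1) = 1 := by omega
    have e4 : b+1+1-(b+1+1) = 0 := by omega
    have e5 : b+1-(b+1) = 0 := by omega
    simp only [Nat.sub_zero]
    rw [e1, e2, e4, e3, e5]
    have h := case_topm1 b
    push_cast
    linarith [h]
  · -- interior: 2 ≤ a ≤ n
    obtain ⟨b, rfl⟩ : ∃ b, a = b+2 := ⟨a-2, by omega⟩
    obtain ⟨c, rfl⟩ : ∃ c, n = b+c+2 := ⟨n-b-2, by omega⟩
    rw [if_pos (by omega), if_pos (by omega), if_pos (by omega),
      if_pos (by omega), if_pos (by omega), if_pos (by omega)]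
    have e1 : b+2-2 = b := by omega
    have e2 : b+2-1 = b+1 := by omega
    have e3 : b+c+2+1-(b+1) = c+2 := by omega
    have e4 : b+c+2+1-(b+2) = c+1 := by omega
    have e5 : b+c+2-(b+1) = c+1 := by omega
    simp only [Nat.sub_zero]
    rw [e1, e2, e3, e4, e5]
    have h := case_main b c
    push_cast
    linarith [h]

def W (n : ℕ) : Rxy :=
  ∑ i ∈ Finset.range (n+1), MvPolynomial.C (E i * E (n-i)) * px ^ (2*i) * py ^ (2*(n-i))

lemma gsum (n m s : ℕ) (hms : m + s ≤ n+3) (c : ℕ → ℚ) :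
    ∑ k ∈ range m, MvPolynomial.C (c k) * px^(2*(k+s)) * py^(2*(n+2-(k+s)))
    = ∑ a ∈ range (n+3),
        MvPolynomial.C (if s ≤ a ∧ a < m + s then c (a-s) else 0) * px^(2*a) * py^(2*(n+2-a)) := by
  have hfil : (range (n+3)).filter (fun a => s ≤ a ∧ a < m + s) = Finset.Ico s (m+s) := by
    ext a
    simp only [Finset.mem_filter, Finset.mem_range, Finset.mem_Ico]
    omega
  have h2 : ∑ a ∈ range (n+3),
        MvPolynomial.C (if s ≤ a ∧ a < m + s then c (a-s) else 0) * px^(2*a) * py^(2*(n+2-a))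
      = ∑ a ∈ range (n+3), (if s ≤ a ∧ a < m + s then
          MvPolynomial.C (c (a-s)) * px^(2*a) * py^(2*(n+2-a)) else 0) := by
    apply Finset.sum_congr rfl
    intro a _
    split_ifs <;> simp
  rw [h2, ← Finset.sum_filter, hfil, Finset.sum_Ico_eq_sum_range]
  simp only [Nat.add_sub_cancel]
  apply Finset.sum_congr rfl
  intro k _
  have h1 : s + k - s = k := by omega
  have h3 : s + k = k + s := by omega
  rw [h1, h3]

lemma diamond (n : ℕ) :
    (px^2 - py^2)^2 * MvPolynomial.C ((n:ℚ)+2)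
        * (∑ k ∈ range (n+1), MvPolynomial.C (Tnk n k) * px^(2*k) * py^(2*(n-k)))
    = (px^2 + py^2) * W (n+1) - 8 * px^2 * py^2 * W n := by
  have hL : (px^2 - py^2)^2 * MvPolynomial.C ((n:ℚ)+2)
        * (∑ k ∈ range (n+1), MvPolynomial.C (Tnk n k) * px^(2*k) * py^(2*(n-k)))
      = (∑ k ∈ range (n+1), MvPolynomial.C (((n:ℚ)+2) * Tnk n k) * px^(2*(k+2)) * py^(2*(n+2-(k+2))))
        - (∑ k ∈ range (n+1), MvPolynomial.C (2*(((n:ℚ)+2) * Tnk n k)) * px^(2*(k+1)) * py^(2*(n+2-(k+1))))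
        + (∑ k ∈ range (n+1), MvPolynomial.C (((n:ℚ)+2) * Tnk n k) * px^(2*(k+0)) * py^(2*(n+2-(k+0)))) := by
    rw [Finset.mul_sum, ← Finset.sum_sub_distrib, ← Finset.sum_add_distrib]
    apply Finset.sum_congr rfl
    intro k hk
    have hkn : k ≤ n := by simpa using Nat.lt_succ_iff.mp (mem_range.mp hk)
    have e1 : n+2-(k+2) = n-k := by omega
    have e2 : 2*(n+2-(k+1)) = 2*(n-k) + 2 := by omega
    have e3 : 2*(n+2-(k+0)) = 2*(n-k) + 4 := by omega
    have e4 : 2*(k+2) = 2*k+4 := by omega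
    have e5 : 2*(k+1) = 2*k+2 := by omega
    have e6 : 2*(k+0) = 2*k := by omega
    rw [e1, e2, e3, e4, e5, e6]
    simp only [map_mul, map_add, map_ofNat]
    push_cast
    ring
  have hR1 : (px^2 + py^2) * W (n+1)
      = (∑ i ∈ range (n+2), MvPolynomial.C (E i * E (n+1-i)) * px^(2*(i+1)) * py^(2*(n+2-(i+1))))
        + (∑ i ∈ range (n+2), MvPolynomial.C (E i * E (n+1-i)) * px^(2*(i+0)) * py^(2*(n+2-(i+0)))) := by
    unfold W
    rw [Finset.mul_sum, ← Finset.sum_add_distrib]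
    apply Finset.sum_congr rfl
    intro i hi
    have hin : i ≤ n+1 := by simpa using Nat.lt_succ_iff.mp (mem_range.mp hi)
    have e1 : n+2-(i+1) = n+1-i := by omega
    have e2 : 2*(n+2-(i+0)) = 2*(n+1-i) + 2 := by omega
    have e3 : 2*(i+1) = 2*i+2 := by omega
    have e4 : 2*(i+0) = 2*i := by omega
    rw [e1, e2, e3, e4]
    ring
  have hR2 : 8 * px^2 * py^2 * W n
      = ∑ i ∈ range (n+1), MvPolynomial.C (8 * (E i * E (n-i))) * px^(2*(i+1)) * py^(2*(n+2-(i+1))) := by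
    unfold W
    rw [Finset.mul_sum]
    apply Finset.sum_congr rfl
    intro i hi
    have hin : i ≤ n := by simpa using Nat.lt_succ_iff.mp (mem_range.mp hi)
    have e1 : 2*(n+2-(i+1)) = 2*(n-i) + 2 := by omega
    have e2 : 2*(i+1) = 2*i+2 := by omega
    rw [e1, e2]
    simp only [map_mul, map_ofNat]
    ring
  rw [hL, hR1, hR2,
    gsum n (n+1) 2 (by omega) (fun k => ((n:ℚ)+2) * Tnk n k),
    gsum n (n+1) 1 (by omega) (fun k => 2*(((n:ℚ)+2) * Tnk n k)),
    gsum n (n+1) 0 (by omega) (fun k => ((n:ℚ)+2) * Tnk n k),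
    gsum n (n+2) 1 (by omega) (fun i => E i * E (n+1-i)),
    gsum n (n+2) 0 (by omega) (fun i => E i * E (n+1-i)),
    gsum n (n+1) 1 (by omega) (fun i => 8 * (E i * E (n-i))),
    ← Finset.sum_sub_distrib, ← Finset.sum_add_distrib,
    ← Finset.sum_add_distrib, ← Finset.sum_sub_distrib]
  apply Finset.sum_congr rfl
  intro a ha
  have han : a < n+3 := mem_range.mp ha
  have key := keyQ n a han
  have key' := congrArg (fun q : ℚ => (MvPolynomial.C q : Rxy)) key
  beta_reduce at key'
  simp only [map_sub, map_add] at key'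
  linear_combination (px^(2*a) * py^(2*(n+2-a))) * key'

def Qx : PowerSeries Rxy := PowerSeries.mk fun n => MvPolynomial.C ((-1:ℚ)^n * E n) * px ^ (2*n)
def Qy : PowerSeries Rxy := PowerSeries.mk fun n => MvPolynomial.C ((-1:ℚ)^n * E n) * py ^ (2*n)

lemma coeff_QxQx (n : ℕ) : PowerSeries.coeff n (Qx * Qx)
    = MvPolynomial.C ((-1:ℚ)^n * ∑ i ∈ range (n+1), E i * E (n-i)) * px ^ (2*n) := by
  rw [PowerSeries.coeff_mul, Finset.Nat.sum_antidiagonal_eq_sum_range_succ_mk]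
  simp only [Qx, PowerSeries.coeff_mk]
  have step : ∀ k ∈ range (n+1),
      (MvPolynomial.C ((-1:ℚ)^k * E k) * px^(2*k))
        * (MvPolynomial.C ((-1:ℚ)^(n-k) * E (n-k)) * px^(2*(n-k)))
      = MvPolynomial.C ((-1:ℚ)^n) * MvPolynomial.C (E k * E (n-k)) * px^(2*n) := by
    intro k hk
    have hkn : k ≤ n := by simpa using Nat.lt_succ_iff.mp (mem_range.mp hk)
    have hxp : 2*k + 2*(n-k) = 2*n := by omega
    rw [mul_mul_mul_comm, ← map_mul, ← pow_add, hxp,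
      show ((-1:ℚ)^k * E k) * ((-1:ℚ)^(n-k) * E (n-k))
        = ((-1:ℚ)^k * (-1:ℚ)^(n-k)) * (E k * E (n-k)) by ring,
      ← pow_add, show k+(n-k) = n by omega, map_mul]
  rw [Finset.sum_congr rfl step, ← Finset.sum_mul, ← Finset.mul_sum, ← map_sum, ← map_mul]

lemma coeff_QxQy (n : ℕ) : PowerSeries.coeff n (Qx * Qy)
    = MvPolynomial.C ((-1:ℚ)^n) * W n := by
  rw [PowerSeries.coeff_mul, Finset.Nat.sum_antidiagonal_eq_sum_range_succ_mk]
  simp only [Qx, Qy, PowerSeries.coeff_mk]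
  have step : ∀ k ∈ range (n+1),
      (MvPolynomial.C ((-1:ℚ)^k * E k) * px^(2*k))
        * (MvPolynomial.C ((-1:ℚ)^(n-k) * E (n-k)) * py^(2*(n-k)))
      = MvPolynomial.C ((-1:ℚ)^n) * (MvPolynomial.C (E k * E (n-k)) * px^(2*k) * py^(2*(n-k))) := by
    intro k hk
    have hkn : k ≤ n := by simpa using Nat.lt_succ_iff.mp (mem_range.mp hk)
    rw [show ((-1:ℚ)^k * E k) = (-1:ℚ)^k * E k from rfl]
    rw [map_mul, map_mul, map_mul,
      show ((MvPolynomial.C ((-1:ℚ)^k) * MvPolynomial.C (E k)) * px^(2*k))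
          * ((MvPolynomial.C ((-1:ℚ)^(n-k)) * MvPolynomial.C (E (n-k))) * py^(2*(n-k)))
        = (MvPolynomial.C ((-1:ℚ)^k) * MvPolynomial.C ((-1:ℚ)^(n-k)))
          * ((MvPolynomial.C (E k) * MvPolynomial.C (E (n-k))) * px^(2*k) * py^(2*(n-k))) by ring,
      ← map_mul, ← pow_add, show k+(n-k) = n by omega, ← map_mul]
  rw [Finset.sum_congr rfl step, ← Finset.mul_sum]
  rfl

lemma hQ2x : Qx * Qx * (1 + PowerSeries.C (4*px^2) * PowerSeries.X) = 1 := by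
  apply PowerSeries.ext
  intro n
  rw [mul_add, mul_one, (PowerSeries.coeff n).map_add,
    show Qx * Qx * (PowerSeries.C (4*px^2) * PowerSeries.X)
      = (PowerSeries.C (4*px^2) * (Qx * Qx)) * PowerSeries.X by ring]
  cases n with
  | zero =>
    rw [PowerSeries.coeff_zero_mul_X, coeff_QxQx 0, PowerSeries.coeff_one]
    simp [E_zero]
  | succ n =>
    rw [PowerSeries.coeff_succ_mul_X, PowerSeries.coeff_C_mul, coeff_QxQx, coeff_QxQx,
      PowerSeries.coeff_one, Esum_step n]
    simp only [if_neg (Nat.succ_ne_zero n), map_mul, map_pow, map_neg, map_one, map_ofNat,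
      show 2*(n+1) = 2*n+2 by omega]
    ring

lemma coeff_QyQy (n : ℕ) : PowerSeries.coeff n (Qy * Qy)
    = MvPolynomial.C ((-1:ℚ)^n * ∑ i ∈ range (n+1), E i * E (n-i)) * py ^ (2*n) := by
  rw [PowerSeries.coeff_mul, Finset.Nat.sum_antidiagonal_eq_sum_range_succ_mk]
  simp only [Qy, PowerSeries.coeff_mk]
  have step : ∀ k ∈ range (n+1),
      (MvPolynomial.C ((-1:ℚ)^k * E k) * py^(2*k))
        * (MvPolynomial.C ((-1:ℚ)^(n-k) * E (n-k)) * py^(2*(n-k)))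
      = MvPolynomial.C ((-1:ℚ)^n) * MvPolynomial.C (E k * E (n-k)) * py^(2*n) := by
    intro k hk
    have hkn : k ≤ n := by simpa using Nat.lt_succ_iff.mp (mem_range.mp hk)
    have hxp : 2*k + 2*(n-k) = 2*n := by omega
    rw [mul_mul_mul_comm, ← map_mul, ← pow_add, hxp,
      show ((-1:ℚ)^k * E k) * ((-1:ℚ)^(n-k) * E (n-k))
        = ((-1:ℚ)^k * (-1:ℚ)^(n-k)) * (E k * E (n-k)) by ring,
      ← pow_add, show k+(n-k) = n by omega, map_mul]
  rw [Finset.sum_congr rfl step, ← Finset.sum_mul, ← Finset.mul_sum, ← map_sum, ← map_mul]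

lemma hQ2y : Qy * Qy * (1 + PowerSeries.C (4*py^2) * PowerSeries.X) = 1 := by
  apply PowerSeries.ext
  intro n
  rw [mul_add, mul_one, (PowerSeries.coeff n).map_add,
    show Qy * Qy * (PowerSeries.C (4*py^2) * PowerSeries.X)
      = (PowerSeries.C (4*py^2) * (Qy * Qy)) * PowerSeries.X by ring]
  cases n with
  | zero =>
    rw [PowerSeries.coeff_zero_mul_X, coeff_QyQy 0, PowerSeries.coeff_one]
    simp [E_zero]
  | succ n =>
    rw [PowerSeries.coeff_succ_mul_X, PowerSeries.coeff_C_mul, coeff_QyQy, coeff_QyQy,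
      PowerSeries.coeff_one, Esum_step n]
    simp only [if_neg (Nat.succ_ne_zero n), map_mul, map_pow, map_neg, map_one, map_ofNat,
      show 2*(n+1) = 2*n+2 by omega]
    ring

lemma conv : (PowerSeries.C (px^2+py^2) + PowerSeries.C (8*px^2*py^2) * PowerSeries.X)
      * (Qx * Qy)
    = PowerSeries.C (px^2+py^2) + PowerSeries.C ((px^2-py^2)^2) * Phi := by
  apply PowerSeries.ext
  intro n
  rw [show (PowerSeries.C (px^2+py^2) + PowerSeries.C (8*px^2*py^2) * PowerSeries.X)
        * (Qx * Qy)
      = PowerSeries.C (px^2+py^2) * (Qx*Qy)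
        + (PowerSeries.C (8*px^2*py^2) * (Qx*Qy)) * PowerSeries.X by ring,
    (PowerSeries.coeff n).map_add, (PowerSeries.coeff n).map_add,
    PowerSeries.coeff_C_mul, PowerSeries.coeff_C_mul]
  cases n with
  | zero =>
    rw [PowerSeries.coeff_zero_mul_X, coeff_QxQy 0]
    simp [Phi, W, E_zero, PowerSeries.coeff_C, PowerSeries.coeff_mk]
  | succ n =>
    rw [PowerSeries.coeff_succ_mul_X, PowerSeries.coeff_C_mul, coeff_QxQy, coeff_QxQy,
      PowerSeries.coeff_C]
    simp only [Phi, PowerSeries.coeff_mk, if_pos (by omega : 1 ≤ n+1),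
      if_neg (Nat.succ_ne_zero n), Nat.add_sub_cancel]
    have hSig : ∑ k ∈ Finset.range (n+1), MvPolynomial.C (Tnk n k) * px^(2*k) * py^(2*n - 2*k)
        = ∑ k ∈ Finset.range (n+1), MvPolynomial.C (Tnk n k) * px^(2*k) * py^(2*(n-k)) := by
      apply Finset.sum_congr rfl
      intro k hk
      have : k ≤ n := by simpa using Nat.lt_succ_iff.mp (mem_range.mp hk)
      rw [show 2*n - 2*k = 2*(n-k) by omega]
    rw [hSig]
    have hd := diamond n
    have hcast : ((n+1+1 : ℕ) : ℚ) = (n:ℚ)+2 := by push_cast; ring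
    rw [hcast]
    simp only [map_mul, map_pow, map_neg, map_one, map_add, map_ofNat] at hd ⊢
    linear_combination (-(1:Rxy))^n * hd

lemma constCoeff_Qx : PowerSeries.constantCoeff Qx = 1 := by
  rw [Qx, PowerSeries.constantCoeff_mk]
  simp [E_zero]

lemma constCoeff_Qy : PowerSeries.constantCoeff Qy = 1 := by
  rw [Qy, PowerSeries.constantCoeff_mk]
  simp [E_zero]

/-- Expansion of the Bergman kernel of the dessin spectral curve in local Airy
coordinates: `1/(S₁S₂(xS₂-yS₁)²) = 1/(x-y)² + Φ`, stated multiplicatively. -/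
theorem bergman_kernel_airy_expansion
    (S₁ S₂ : PowerSeries Rxy)
    (hS₁c : PowerSeries.constantCoeff S₁ = 1)
    (hS₂c : PowerSeries.constantCoeff S₂ = 1)
    (hS₁ : S₁ ^ 2 = 1 + PowerSeries.C (4 * px ^ 2) * PowerSeries.X)
    (hS₂ : S₂ ^ 2 = 1 + PowerSeries.C (4 * py ^ 2) * PowerSeries.X) :
    S₁ * S₂ * (PowerSeries.C px * S₂ - PowerSeries.C py * S₁) ^ 2
        * (1 + PowerSeries.C ((px - py) ^ 2) * Phi)
      = PowerSeries.C ((px - py) ^ 2) := by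
  have hQxS : Qx * S₁ = 1 := by
    have h2 : (Qx * S₁ - 1) * (Qx * S₁ + 1) = 0 := by
      linear_combination Qx * Qx * hS₁ + hQ2x
    rcases mul_eq_zero.mp h2 with h | h
    · exact sub_eq_zero.mp h
    · exfalso
      have hc := congrArg (PowerSeries.constantCoeff) h
      rw [map_add, map_mul, constCoeff_Qx, hS₁c] at hc
      simp at hc
  have hQyS : Qy * S₂ = 1 := by
    have h2 : (Qy * S₂ - 1) * (Qy * S₂ + 1) = 0 := by
      linear_combination Qy * Qy * hS₂ + hQ2y
    rcases mul_eq_zero.mp h2 with h | h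
    · exact sub_eq_zero.mp h
    · exfalso
      have hc := congrArg (PowerSeries.constantCoeff) h
      rw [map_add, map_mul, constCoeff_Qy, hS₂c] at hc
      simp at hc
  have key : S₁ * S₂ * (PowerSeries.C (px^2+py^2) + PowerSeries.C ((px^2-py^2)^2) * Phi)
      = PowerSeries.C (px^2+py^2) + PowerSeries.C (8*px^2*py^2) * PowerSeries.X := by
    linear_combination (-(S₁*S₂)) * conv
      + ((PowerSeries.C (px^2+py^2) + PowerSeries.C (8*px^2*py^2) * PowerSeries.X)
          * Qy * S₂) * hQxS
      + (PowerSeries.C (px^2+py^2) + PowerSeries.C (8*px^2*py^2) * PowerSeries.X) * hQyS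
  -- nonvanishing of M = C px * S₂ + C py * S₁
  have hpxy : px + py ≠ 0 := by
    intro h
    have := congrArg (MvPolynomial.eval (fun _ => (1:ℚ))) h
    simp [px, py] at this
  have hM : PowerSeries.C px * S₂ + PowerSeries.C py * S₁ ≠ 0 := by
    intro h
    have hc := congrArg (PowerSeries.constantCoeff) h
    rw [map_add, map_mul, map_mul, hS₁c, hS₂c] at hc
    simp only [mul_one, map_zero, PowerSeries.constantCoeff_C] at hc
    exact hpxy hc
  apply mul_right_cancel₀ (pow_ne_zero 2 hM)
  simp only [map_mul, map_pow, map_add, map_sub, map_ofNat] at hS₁ hS₂ key ⊢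
  have e1 : (PowerSeries.C px * S₂ - PowerSeries.C py * S₁)
        * (PowerSeries.C px * S₂ + PowerSeries.C py * S₁)
      = (PowerSeries.C px)^2 - (PowerSeries.C py)^2 := by
    linear_combination (PowerSeries.C px)^2 * hS₂ - (PowerSeries.C py)^2 * hS₁
  linear_combination
    (S₁*S₂*(1+(PowerSeries.C px - PowerSeries.C py)^2*Phi)
      *((PowerSeries.C px * S₂ - PowerSeries.C py * S₁)
          *(PowerSeries.C px * S₂ + PowerSeries.C py * S₁)
        + ((PowerSeries.C px)^2 - (PowerSeries.C py)^2))) * e1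
    + ((PowerSeries.C px - PowerSeries.C py)^2) * key
    - ((PowerSeries.C px - PowerSeries.C py)^2*(PowerSeries.C px)^2) * hS₂
    - ((PowerSeries.C px - PowerSeries.C py)^2*(PowerSeries.C py)^2) * hS₁

end
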